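/- Determinism gives uniqueness of maximal forward translations: for a deterministic TGG (no critical pairs among its forward rules), any two maximal forward-rule application sequences starting from the same initialized source model init_F(S) yield results that are equal up to isomorphism including bookkeeping; in particular, either every maximal sequence deletes all bookkeeping edges of the source model or none does. -/
import Mathlib

/-- Every element reaches a maximal element (termination via `μ`). -/
lemma exists_maximal_aux {α : Type*} (Step : α → α → Prop) (μ : α → ℕ)
    (hdec : ∀ a b, Step a b → μ b < μ a) :
    ∀ n a, μ a ≤ n → ∃ w, Relation.ReflTransGen Step a w ∧ ∀ w', ¬ Step w w' := by
  intro n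
  induction n with
  | zero =>
    intro a ha
    by_cases h : ∃ b, Step a b
    · obtain ⟨b, hb⟩ := h
      exact absurd (hdec a b hb) (by omega)
    · exact ⟨a, Relation.ReflTransGen.refl, fun w' hw' => h ⟨w', hw'⟩⟩
  | succ n ih =>
    intro a ha
    by_cases h : ∃ b, Step a b
    · obtain ⟨b, hb⟩ := h
      obtain ⟨w, hw, hmax⟩ := ih b (by have := hdec a b hb; omega)
      exact ⟨w, Relation.ReflTransGen.head hb hw, hmax⟩
    · exact ⟨a, Relation.ReflTransGen.refl, fun w' hw' => h ⟨w', hw'⟩⟩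

/-- Newman's lemma specialized: uniqueness of maximal results, by strong
induction on the measure. -/
lemma newman_aux {α : Type*} (Step : α → α → Prop) (μ : α → ℕ)
    (hdec : ∀ a b, Step a b → μ b < μ a)
    (hconfl : ∀ a b c, Step a b → Step a c →
      ∃ d, Relation.ReflTransGen Step b d ∧ Relation.ReflTransGen Step c d) :
    ∀ n a, μ a ≤ n → ∀ Y Z, Relation.ReflTransGen Step a Y →
      Relation.ReflTransGen Step a Z →
      (∀ Y', ¬ Step Y Y') → (∀ Z', ¬ Step Z Z') → Y = Z := by
  intro n
  induction n with
  | zero =>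
    intro a ha Y Z hY hZ _ _
    rcases hY.cases_head with rfl | ⟨b, hab, _⟩
    · rcases hZ.cases_head with rfl | ⟨c, hac, _⟩
      · rfl
      · exact absurd (hdec a c hac) (by omega)
    · exact absurd (hdec a b hab) (by omega)
  | succ n ih =>
    intro a ha Y Z hY hZ hmY hmZ
    rcases hY.cases_head with rfl | ⟨b, hab, hbY⟩
    · rcases hZ.cases_head with rfl | ⟨c, hac, _⟩
      · rfl
      · exact absurd hac (hmY c)
    · rcases hZ.cases_head with rfl | ⟨c, hac, hcZ⟩
      · exact absurd hab (hmZ b)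
      · obtain ⟨d, hbd, hcd⟩ := hconfl a b c hab hac
        obtain ⟨w, hdw, hmw⟩ := exists_maximal_aux Step μ hdec (μ d) d le_rfl
        have hb : μ b ≤ n := by have := hdec a b hab; omega
        have hc : μ c ≤ n := by have := hdec a c hac; omega
        have h1 : Y = w := ih b hb Y w hbY (hbd.trans hdw) hmY hmw
        have h2 : Z = w := ih c hc Z w hcZ (hcd.trans hdw) hmZ hmw
        rw [h1, h2]


/-- determinism gives uniqueness of maximal forward
translations. `α` is the type of model triplets with bookkeeping, taken up to
isomorphism including bookkeeping (so equality in `α` means equality up to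
isomorphism including bookkeeping); `Step` is a single forward rule
application. Critical-pair freeness of the deterministic TGG yields local
confluence (`hconfl`), and termination holds since every forward rule
application strictly decreases the number `μ` of remaining bookkeeping edges
(`hdec`). `bk Y` counts the bookkeeping edges on source-model elements of `Y`.
Conclusion: any two maximal forward-rule application sequences starting from
the same initialized source model `X = init_F(S)` end in equal results, and in
particular either both delete all source bookkeeping edges or neither does —
so either every maximal sequence deletes all bookkeeping edges or none does. -/
theorem deterministic_unique_maximal_result {α : Type*}
    (Step : α → α → Prop) (μ : α → ℕ) (bk : α → ℕ)
    (hdec : ∀ a b, Step a b → μ b < μ a)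
    (hconfl : ∀ a b c, Step a b → Step a c →
      ∃ d, Relation.ReflTransGen Step b d ∧ Relation.ReflTransGen Step c d)
    (X : α) :
    ∀ Y Z, Relation.ReflTransGen Step X Y → Relation.ReflTransGen Step X Z →
      (∀ Y', ¬ Step Y Y') → (∀ Z', ¬ Step Z Z') →
      Y = Z ∧ (bk Y = 0 ↔ bk Z = 0) := by
  intro Y Z hY hZ hmY hmZ
  have h := newman_aux Step μ hdec hconfl (μ X) X le_rfl Y Z hY hZ hmY hmZ
  exact ⟨h, by rw [h]⟩
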